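/- arXiv:1712.01138 — 2 statements merged into one kernel-verified Lean document; each statement's English description precedes it below -/
import Mathlib

section
/- Let φ : ℝ^d → ℝ be 1-Lipschitz. Define ψ(y) = sgn(y₁) · (φ(y) - φ(y'))/2, where y' = (-y₁, y₂, …, y_d) and sgn is the sign function (with sgn(0) = 0). Then ψ is 1-Lipschitz on ℝ^d. -/
/-- If `φ` is 1-Lipschitz on `ℝ^d`, then `ψ(y) = sgn(y₁)(φ(y) - φ(y'))/2` is 1-Lipschitz,
where `y'` is the reflection of `y` across `{y₁ = 0}`. -/
theorem stmt3 (d : ℕ) (hd : 0 < d) (φ : EuclideanSpace ℝ (Fin d) → ℝ)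
    (hφ : LipschitzWith 1 φ) :
    LipschitzWith 1 (fun y : EuclideanSpace ℝ (Fin d) =>
      Real.sign (y ⟨0, hd⟩) *
        ((φ y - φ (WithLp.toLp 2 (fun i => if i = ⟨0, hd⟩ then -(y ⟨0, hd⟩) else y i))) / 2)) := by
  set e : Fin d := ⟨0, hd⟩ with he
  set R : EuclideanSpace ℝ (Fin d) → EuclideanSpace ℝ (Fin d) :=
    fun y => WithLp.toLp 2 (fun i => if i = e then -(y e) else y i) with hR
  set f : EuclideanSpace ℝ (Fin d) → ℝ := fun y => (φ y - φ (R y)) / 2 with hf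
  have hRapp : ∀ (y : EuclideanSpace ℝ (Fin d)) i,
      R y i = if i = e then -(y e) else y i := fun y i => rfl
  have hRdist : ∀ x y, dist (R x) (R y) = dist x y := by
    intro x y
    rw [EuclideanSpace.dist_eq, EuclideanSpace.dist_eq]
    congr 1
    refine Finset.sum_congr rfl fun i _ => ?_
    rcases eq_or_ne i e with h | h
    · subst h; simp [hRapp]
    · simp [hRapp, h]
  have hcross : ∀ x y : EuclideanSpace ℝ (Fin d),
      x e * y e ≤ 0 → dist x (R y) ≤ dist x y := by
    intro x y hxy
    rw [EuclideanSpace.dist_eq, EuclideanSpace.dist_eq]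
    apply Real.sqrt_le_sqrt
    apply Finset.sum_le_sum
    intro i _
    by_cases h : i = e
    · subst h
      simp only [hRapp, eq_self_iff_true, if_true]
      rw [Real.dist_eq, Real.dist_eq]
      have h1 : |x e - -(y e)| ^ 2 = (x e - -(y e)) ^ 2 := sq_abs _
      have h2 : |x e - y e| ^ 2 = (x e - y e) ^ 2 := sq_abs _
      nlinarith [h1, h2]
    · simp [hRapp, h]
  have hRR : ∀ y : EuclideanSpace ℝ (Fin d), R (R y) = y := by
    intro y
    ext i
    rcases eq_or_ne i e with h | h
    · subst h; simp [hRapp]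
    · simp [hRapp, h]
  have hfR : ∀ y, f (R y) = - f y := by
    intro y
    simp only [hf]
    rw [hRR y]
    ring
  have hf0 : ∀ y : EuclideanSpace ℝ (Fin d), y e = 0 → f y = 0 := by
    intro y hy
    have hRy : R y = y := by
      ext i
      rcases eq_or_ne i e with h | h
      · subst h; simp [hRapp, hy]
      · simp [hRapp, h]
    simp only [hf, hRy, sub_self, zero_div]
  have hfLip : ∀ x y, |f x - f y| ≤ dist x y := by
    intro x y
    have h1 : |φ x - φ y| ≤ dist x y := by
      have := hφ.dist_le_mul x y
      simpa [Real.dist_eq] using this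
    have h2 : |φ (R x) - φ (R y)| ≤ dist x y := by
      have := hφ.dist_le_mul (R x) (R y)
      rw [hRdist] at this
      simpa [Real.dist_eq] using this
    have h3 : f x - f y = ((φ x - φ y) - (φ (R x) - φ (R y))) / 2 := by
      simp only [hf]; ring
    have h4 : |(φ x - φ y) - (φ (R x) - φ (R y))|
        ≤ |φ x - φ y| + |φ (R x) - φ (R y)| := abs_sub _ _
    rw [h3, abs_div, abs_two]
    linarith
  have hpos : ∀ z : EuclideanSpace ℝ (Fin d), 0 ≤ z e →
      Real.sign (z e) * f z = f z := by
    intro z hz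
    rcases hz.lt_or_eq with h | h
    · rw [Real.sign_of_pos h, one_mul]
    · rw [hf0 z h.symm, mul_zero]
  have hneg : ∀ z : EuclideanSpace ℝ (Fin d), z e ≤ 0 →
      Real.sign (z e) * f z = f (R z) := by
    intro z hz
    rcases hz.lt_or_eq with h | h
    · rw [Real.sign_of_neg h, hfR]; ring
    · rw [h, Real.sign_zero, zero_mul, hfR, hf0 z h, neg_zero]
  apply LipschitzWith.of_dist_le_mul
  intro x y
  rw [NNReal.coe_one, one_mul, Real.dist_eq]
  rcases le_total 0 (x e) with hx | hx <;> rcases le_total 0 (y e) with hy | hy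
  · rw [hpos x hx, hpos y hy]
    exact hfLip x y
  · rw [hpos x hx, hneg y hy]
    calc |f x - f (R y)| ≤ dist x (R y) := hfLip _ _
      _ ≤ dist x y := hcross x y (mul_nonpos_iff.mpr (Or.inl ⟨hx, hy⟩))
  · rw [hneg x hx, hpos y hy]
    calc |f (R x) - f y| ≤ dist (R x) y := hfLip _ _
      _ = dist y (R x) := dist_comm _ _
      _ ≤ dist y x := hcross y x (mul_nonpos_iff.mpr (Or.inl ⟨hy, hx⟩))
      _ = dist x y := dist_comm _ _
  · rw [hneg x hx, hneg y hy]
    calc |f (R x) - f (R y)| ≤ dist (R x) (R y) := hfLip _ _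
      _ = dist x y := hRdist x y
end

section
/- Let x₀ = (ξ, 0, …, 0) ∈ ℝ^d with ξ > 0 small, and let x ∈ ℝ^d satisfy |x₁| ≤ |x'|², where x = (x₁, x') ∈ ℝ × ℝ^{d-1} and |x| ≤ 1 (the boundary-flatness condition of a C^{1,1} domain tangent to {x₁ = 0} at the origin). Then for every k ∈ ℕ there is a constant C depending only on d and k such that |1/|x - x₀|^k - 1/|x + x₀|^k| ≤ C/|x + x₀|^{k-1}. -/
lemma aux_pow_sub_pow (n : ℕ) (u v : ℝ) (hu : 0 ≤ u) (hv : 0 ≤ v) :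
    |u ^ n - v ^ n| ≤ n * max u v ^ (n - 1) * |u - v| := by
  rw [← geom_sum₂_mul, abs_mul]
  gcongr
  calc |∑ i ∈ Finset.range n, u ^ i * v ^ (n - 1 - i)|
      ≤ ∑ i ∈ Finset.range n, |u ^ i * v ^ (n - 1 - i)| :=
        Finset.abs_sum_le_sum_abs _ _
    _ ≤ ∑ _i ∈ Finset.range n, max u v ^ (n - 1) := by
        apply Finset.sum_le_sum
        intro i hi
        rw [abs_of_nonneg (by positivity)]
        calc u ^ i * v ^ (n - 1 - i)
            ≤ max u v ^ i * max u v ^ (n - 1 - i) := by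
              apply mul_le_mul (pow_le_pow_left₀ hu (le_max_left _ _) _)
                (pow_le_pow_left₀ hv (le_max_right _ _) _) (by positivity) (by positivity)
          _ = max u v ^ (n - 1) := by
              rw [← pow_add]; congr 1
              have := Finset.mem_range.mp hi; omega
    _ = n * max u v ^ (n - 1) := by
        rw [Finset.sum_const, Finset.card_range, nsmul_eq_mul]

set_option maxHeartbeats 1000000 in
/-- Boundary comparison estimate for the image-charge kernel: if `x₀ = ξ e₁` with
`0 < ξ < 1`, and `x` satisfies the flatness condition `|x₁| ≤ |x'|²` with `|x| ≤ 1`,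
then `|1/|x-x₀|^k - 1/|x+x₀|^k| ≤ C/|x+x₀|^{k-1}` with `C` depending only on `d`, `k`. -/
theorem stmt12 (d : ℕ) (hd : 2 ≤ d) (k : ℕ) :
    ∃ C : ℝ, 0 < C ∧ ∀ ξ : ℝ, 0 < ξ → ξ < 1 →
      ∀ x : EuclideanSpace ℝ (Fin d), ‖x‖ ≤ 1 →
        |x ⟨0, by omega⟩| ≤ ∑ i ∈ Finset.univ.erase (⟨0, by omega⟩ : Fin d), (x i) ^ 2 →
        |1 / ‖x - ξ • EuclideanSpace.single (⟨0, by omega⟩ : Fin d) (1 : ℝ)‖ ^ k -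
            1 / ‖x + ξ • EuclideanSpace.single (⟨0, by omega⟩ : Fin d) (1 : ℝ)‖ ^ k|
          ≤ C / ‖x + ξ • EuclideanSpace.single (⟨0, by omega⟩ : Fin d) (1 : ℝ)‖ ^ (k - 1) := by
  refine ⟨60 * (k + 1) * 5 ^ k, by positivity, ?_⟩
  intro ξ hξ hξ1 x hx hflat
  set e : Fin d := ⟨0, by omega⟩ with he
  set S : ℝ := ∑ i ∈ Finset.univ.erase e, (x i) ^ 2 with hSdef
  set a : ℝ := ‖x - ξ • EuclideanSpace.single e (1 : ℝ)‖ with ha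
  set b : ℝ := ‖x + ξ • EuclideanSpace.single e (1 : ℝ)‖ with hb
  have hSnn : 0 ≤ S := Finset.sum_nonneg fun i _ => sq_nonneg _
  -- norm-squared formulas
  have key : ∀ c : ℝ, ‖x + c • EuclideanSpace.single e (1 : ℝ)‖ ^ 2 = (x e + c) ^ 2 + S := by
    intro c
    rw [EuclideanSpace.norm_eq, Real.sq_sqrt (by positivity)]
    have : ∀ i : Fin d, ‖(x + c • EuclideanSpace.single e (1 : ℝ)) i‖ ^ 2
        = (x i + c * (if i = e then 1 else 0)) ^ 2 := by
      intro i
      simp [EuclideanSpace.single_apply, Real.norm_eq_abs, sq_abs]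
    rw [Finset.sum_congr rfl fun i _ => this i,
      ← Finset.sum_erase_add _ _ (Finset.mem_univ e)]
    simp only [eq_self_iff_true, if_true]
    rw [hSdef]
    have : ∑ i ∈ Finset.univ.erase e, (x i + c * (if i = e then 1 else 0)) ^ 2
        = ∑ i ∈ Finset.univ.erase e, (x i) ^ 2 := by
      apply Finset.sum_congr rfl
      intro i hi
      rw [if_neg (Finset.ne_of_mem_erase hi), mul_zero, add_zero]
    rw [this]; ring
  have hb2 : b ^ 2 = (x e + ξ) ^ 2 + S := by
    rw [hb]; simpa using key ξ
  have ha2 : a ^ 2 = (x e - ξ) ^ 2 + S := by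
    rw [ha, sub_eq_add_neg, ← neg_smul]
    simpa [sub_eq_add_neg] using key (-ξ)
  have hann : 0 ≤ a := norm_nonneg _
  have hbnn : 0 ≤ b := norm_nonneg _
  -- positivity of a and b
  have ha0 : 0 < a := by
    rcases lt_or_eq_of_le hann with h | h
    · exact h
    exfalso
    have h0 : (x e - ξ) ^ 2 + S = 0 := by rw [← ha2, ← h]; ring
    have h1 : S = 0 := le_antisymm (by nlinarith [sq_nonneg (x e - ξ)]) hSnn
    have h2 : x e = ξ := by nlinarith [sq_nonneg (x e - ξ)]
    rw [h1, h2, abs_of_pos hξ] at hflat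
    linarith
  have hb0 : 0 < b := by
    rcases lt_or_eq_of_le hbnn with h | h
    · exact h
    exfalso
    have h0 : (x e + ξ) ^ 2 + S = 0 := by rw [← hb2, ← h]; ring
    have h1 : S = 0 := le_antisymm (by nlinarith [sq_nonneg (x e + ξ)]) hSnn
    have h2 : x e = -ξ := by nlinarith [sq_nonneg (x e + ξ)]
    rw [h1, h2, abs_neg, abs_of_pos hξ] at hflat
    linarith
  -- size bounds
  have hny : ‖ξ • EuclideanSpace.single e (1 : ℝ)‖ = ξ := by
    rw [norm_smul, EuclideanSpace.norm_single]
    simp [abs_of_pos hξ]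
  have ha2le : a ≤ 2 := by
    have := norm_sub_le x (ξ • EuclideanSpace.single e (1 : ℝ))
    rw [hny] at this; rw [ha]; linarith
  have hb2le : b ≤ 2 := by
    have := norm_add_le x (ξ • EuclideanSpace.single e (1 : ℝ))
    rw [hny] at this; rw [hb]; linarith
  clear_value S a b
  clear ha hb hny key hx hSdef
  have hSa : S ≤ a ^ 2 := by linarith [sq_nonneg (x e - ξ)]
  have hSb : S ≤ b ^ 2 := by linarith [sq_nonneg (x e + ξ)]
  have habs1 : |x e - ξ| ≤ a := by
    nlinarith [sq_abs (x e - ξ), sq_nonneg (|x e - ξ| - a), abs_nonneg (x e - ξ)]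
  have habs2 : |x e + ξ| ≤ b := by
    nlinarith [sq_abs (x e + ξ), sq_nonneg (|x e + ξ| - b), abs_nonneg (x e + ξ)]
  have hxe1 : x e ≤ |x e| := le_abs_self _
  have hxe2 : -(x e) ≤ |x e| := neg_le_abs _
  have hsub1 : ξ - x e ≤ |x e - ξ| := by rw [abs_sub_comm]; exact le_abs_self _
  have hsub2 : x e + ξ ≤ |x e + ξ| := le_abs_self _
  have haa : a ^ 2 ≤ 2 * a := by nlinarith
  have hbb : b ^ 2 ≤ 2 * b := by nlinarith
  have hξa : ξ ≤ 3 * a := by linarith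
  have hξb : ξ ≤ 3 * b := by linarith
  have hdiff : b ^ 2 - a ^ 2 = 4 * ξ * x e := by rw [ha2, hb2]; ring
  have hdabs : |b ^ 2 - a ^ 2| ≤ 12 * a ^ 3 := by
    rw [hdiff, abs_mul, abs_of_pos (by linarith : (0:ℝ) < 4 * ξ)]
    calc 4 * ξ * |x e| ≤ (4 * (3 * a)) * S := by
          apply mul_le_mul (by linarith) hflat (abs_nonneg _) (by positivity)
      _ ≤ 12 * a * a ^ 2 := by nlinarith
      _ = 12 * a ^ 3 := by ring
  have hb25 : b ^ 2 ≤ 25 * a ^ 2 := by nlinarith [le_abs_self (b ^ 2 - a ^ 2)]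
  have hba : b ≤ 5 * a := by nlinarith
  have hab : a ≤ 5 * b := by
    have hd2 : |b ^ 2 - a ^ 2| ≤ 12 * b ^ 3 := by
      rw [hdiff, abs_mul, abs_of_pos (by linarith : (0:ℝ) < 4 * ξ)]
      calc 4 * ξ * |x e| ≤ (4 * (3 * b)) * S := by
            apply mul_le_mul (by linarith) hflat (abs_nonneg _) (by positivity)
        _ ≤ 12 * b ^ 3 := by nlinarith
    nlinarith [neg_abs_le (b ^ 2 - a ^ 2)]
  -- |b - a| ≤ 12 a^2
  have hbadiff : |b - a| ≤ 12 * a ^ 2 := by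
    have hfact : |b - a| * (b + a) = |b ^ 2 - a ^ 2| := by
      rw [← abs_of_pos (by linarith : (0:ℝ) < b + a), ← abs_mul]
      congr 1; ring
    nlinarith [abs_nonneg (b - a), mul_pos ha0 hb0]
  -- the reciprocals
  set u : ℝ := 1 / a with hu
  set v : ℝ := 1 / b with hv
  have hu0 : 0 < u := by positivity
  have hv0 : 0 < v := by positivity
  have huv : |u - v| ≤ 60 := by
    have h1 : u - v = (b - a) / (a * b) := by
      rw [hu, hv]; field_simp
    rw [h1, abs_div, abs_of_pos (mul_pos ha0 hb0), div_le_iff₀ (mul_pos ha0 hb0)]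
    nlinarith
  have hmax : max u v ≤ 5 / b := by
    apply max_le
    · rw [hu, div_le_div_iff₀ ha0 hb0]; linarith
    · rw [hv, div_le_div_iff₀ hb0 hb0]; linarith
  have hgoal : |u ^ k - v ^ k| ≤ (60 * (k + 1) * 5 ^ k) / b ^ (k - 1) := by
    calc |u ^ k - v ^ k| ≤ k * max u v ^ (k - 1) * |u - v| :=
          aux_pow_sub_pow k u v hu0.le hv0.le
      _ ≤ k * (5 / b) ^ (k - 1) * 60 := by
          apply mul_le_mul _ huv (abs_nonneg _) (by positivity)
          apply mul_le_mul_of_nonneg_left _ (Nat.cast_nonneg k)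
          exact pow_le_pow_left₀ (le_max_of_le_left hu0.le) hmax _
      _ = (60 * k * 5 ^ (k - 1)) / b ^ (k - 1) := by
          rw [div_pow]; ring
      _ ≤ (60 * (k + 1) * 5 ^ k) / b ^ (k - 1) := by
          gcongr
          any_goals omega
          all_goals norm_num
  have hrw1 : 1 / a ^ k = u ^ k := by rw [hu, one_div_pow]
  have hrw2 : 1 / b ^ k = v ^ k := by rw [hv, one_div_pow]
  rw [hrw1, hrw2]
  exact hgoal
end
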